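/- arXiv:1310.5801 — 2 statements merged into one kernel-verified Lean document; each statement's English description precedes it below -/
import Mathlib

section
/- Let ω : (0,1] → (0,∞) be an increasing function. Then there exists a constant C = C(ω) > 0 such that Φ(1−r) ≤ C · Φ(1−r²) for all 0 ≤ r < 1; moreover one may take Φ(1−r) ≤ 4·Φ(1−r²) for all 2/3 < r < 1. -/
open MeasureTheory Metric Set Filter

/-- `Φ_ω(x) = 1 + ∫_x^1 ω(t)^2 / t dt`. -/
noncomputable def Phi (ω : ℝ → ℝ) (x : ℝ) : ℝ := 1 + ∫ t in Set.Ioc x 1, ω t ^ 2 / t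

/-!
Splitting the integral at `1 - r²`, and using that `ω²` is increasing,
`Φ(1-r) - Φ(1-r²) = ∫_{1-r}^{1-r²} ω²/t ≤ ω(1-r²)² log(1+r)`, since `(1-r²)/(1-r) = 1+r`.
This extra term is at most `ω(1)²`, which gives the first bound with `C = 1 + ω(1)²`.
For `r > 2/3` the same monotonicity gives `ω(1-r²)² log(1/(1-r²)) ≤ Φ(1-r²) - 1`, and
`log(1+r) ≤ log 2 ≤ 3 log(9/5) ≤ 3 log(1/(1-r²))`, which gives the constant `4`.
-/

open Real

section DivSelf

variable {g : ℝ → ℝ} {a b : ℝ}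

lemma integrableOn_Ioc_div_self_of_monotoneOn (hg : MonotoneOn g (Icc a b)) (ha : 0 < a) :
    IntegrableOn (fun t => g t / t) (Ioc a b) := by
  have hinv : ContinuousOn (fun t : ℝ => t⁻¹) (Icc a b) :=
    continuousOn_inv₀.mono fun t ht => (ha.trans_le ht.1).ne'
  have := (hg.integrableOn_isCompact (μ := volume) isCompact_Icc).mul_continuousOn hinv
    isCompact_Icc
  simpa only [div_eq_mul_inv] using this.mono_set Ioc_subset_Icc_self

lemma integrableOn_Ioc_inv (ha : 0 < a) : IntegrableOn (fun t : ℝ => t⁻¹) (Ioc a b) := by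
  simpa using integrableOn_Ioc_div_self_of_monotoneOn (g := fun _ => (1 : ℝ)) monotoneOn_const ha

lemma setIntegral_Ioc_inv (ha : 0 < a) (hab : a ≤ b) : ∫ t in Ioc a b, t⁻¹ = log (b / a) := by
  rw [← intervalIntegral.integral_of_le hab, integral_inv_of_pos ha (ha.trans_le hab)]

lemma setIntegral_Ioc_div_self_le (hg : MonotoneOn g (Icc a b)) (ha : 0 < a) (hab : a ≤ b) :
    ∫ t in Ioc a b, g t / t ≤ g b * log (b / a) := by
  rw [← setIntegral_Ioc_inv ha hab, ← integral_const_mul]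
  refine setIntegral_mono_on (integrableOn_Ioc_div_self_of_monotoneOn hg ha)
    ((integrableOn_Ioc_inv ha).const_mul _) measurableSet_Ioc fun t ht => ?_
  rw [div_eq_mul_inv]
  exact mul_le_mul_of_nonneg_right (hg (Ioc_subset_Icc_self ht) (right_mem_Icc.2 hab) ht.2)
    (inv_nonneg.2 (ha.trans ht.1).le)

lemma mul_log_le_setIntegral_Ioc_div_self (hg : MonotoneOn g (Icc a b)) (ha : 0 < a)
    (hab : a ≤ b) : g a * log (b / a) ≤ ∫ t in Ioc a b, g t / t := by
  rw [← setIntegral_Ioc_inv ha hab, ← integral_const_mul]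
  refine setIntegral_mono_on ((integrableOn_Ioc_inv ha).const_mul _)
    (integrableOn_Ioc_div_self_of_monotoneOn hg ha) measurableSet_Ioc fun t ht => ?_
  rw [div_eq_mul_inv]
  exact mul_le_mul_of_nonneg_right (hg (left_mem_Icc.2 hab) (Ioc_subset_Icc_self ht) ht.1.le)
    (inv_nonneg.2 (ha.trans ht.1).le)

end DivSelf

lemma log_one_add_le_three_mul_log_one_div {r : ℝ} (hr : 2 / 3 < r) (hr1 : r < 1) :
    log (1 + r) ≤ 3 * log (1 / (1 - r ^ 2)) := by
  have hb : 0 < 1 - r ^ 2 := by nlinarith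
  calc log (1 + r) ≤ log ((9 / 5) ^ 3) := log_le_log (by linarith) (by norm_num; linarith)
    _ = 3 * log (9 / 5) := by rw [log_pow]; norm_num
    _ ≤ 3 * log (1 / (1 - r ^ 2)) := by
      gcongr 3 * ?_
      exact log_le_log (by norm_num) (by rw [le_div_iff₀ hb]; nlinarith)

lemma one_le_Phi (ω : ℝ → ℝ) {x : ℝ} (hx : 0 ≤ x) : 1 ≤ Phi ω x := by
  unfold Phi
  have : 0 ≤ ∫ t in Ioc x 1, ω t ^ 2 / t :=
    setIntegral_nonneg measurableSet_Ioc fun t ht => div_nonneg (sq_nonneg _) (hx.trans ht.1.le)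
  linarith

section Phi

variable {ω : ℝ → ℝ} {a b : ℝ}

lemma monotoneOn_sq_of_pos (hωpos : ∀ t ∈ Ioc (0 : ℝ) 1, 0 < ω t)
    (hωmono : MonotoneOn ω (Ioc (0 : ℝ) 1)) : MonotoneOn (fun t => ω t ^ 2) (Ioc 0 1) :=
  fun s hs _ ht hst => pow_le_pow_left₀ (hωpos s hs).le (hωmono hs ht hst) 2

variable (hω : MonotoneOn (fun t => ω t ^ 2) (Ioc 0 1))
include hω

lemma Phi_eq_add_setIntegral (ha : 0 < a) (hab : a ≤ b) (hb : b ≤ 1) :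
    Phi ω a = Phi ω b + ∫ t in Ioc a b, ω t ^ 2 / t := by
  have hmono : MonotoneOn (fun t => ω t ^ 2) (Icc a 1) :=
    hω.mono fun t ht => ⟨ha.trans_le ht.1, ht.2⟩
  have hint := integrableOn_Ioc_div_self_of_monotoneOn hmono ha
  rw [← Ioc_union_Ioc_eq_Ioc hab hb] at hint
  unfold Phi
  rw [← Ioc_union_Ioc_eq_Ioc hab hb, setIntegral_union (Ioc_disjoint_Ioc_of_le le_rfl)
    measurableSet_Ioc (hint.mono_set subset_union_left) (hint.mono_set subset_union_right)]
  ring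

lemma Phi_le_add_mul_log (ha : 0 < a) (hab : a ≤ b) (hb : b ≤ 1) :
    Phi ω a ≤ Phi ω b + ω b ^ 2 * log (b / a) := by
  have hmono : MonotoneOn (fun t => ω t ^ 2) (Icc a b) :=
    hω.mono fun t ht => ⟨ha.trans_le ht.1, ht.2.trans hb⟩
  rw [Phi_eq_add_setIntegral hω ha hab hb]
  exact add_le_add_right (setIntegral_Ioc_div_self_le hmono ha hab) _

lemma mul_log_one_div_le_Phi_sub_one (hb : 0 < b) (hb1 : b ≤ 1) :
    ω b ^ 2 * log (1 / b) ≤ Phi ω b - 1 := by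
  have hmono : MonotoneOn (fun t => ω t ^ 2) (Icc b 1) :=
    hω.mono fun t ht => ⟨hb.trans_le ht.1, ht.2⟩
  have := mul_log_le_setIntegral_Ioc_div_self hmono hb hb1
  unfold Phi
  linarith

lemma Phi_one_sub_le {r : ℝ} (hr : r ∈ Ico (0 : ℝ) 1) :
    Phi ω (1 - r) ≤ Phi ω (1 - r ^ 2) + ω (1 - r ^ 2) ^ 2 * log (1 + r) := by
  obtain ⟨hr0, hr1⟩ := hr
  have hquot : (1 - r ^ 2) / (1 - r) = 1 + r := by
    rw [div_eq_iff (by linarith)]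
    ring
  rw [← hquot]
  exact Phi_le_add_mul_log hω (by linarith) (by nlinarith) (by nlinarith)

end Phi

/-- if `ω` is increasing then `Φ(1-r) ≤ C Φ(1-r²)` on `[0,1)` for some
`C = C(ω) > 0`, and moreover `Φ(1-r) ≤ 4 Φ(1-r²)` for `2/3 < r < 1`. -/
theorem stmt8 (ω : ℝ → ℝ)
    (hωpos : ∀ t ∈ Set.Ioc (0 : ℝ) 1, 0 < ω t)
    (hωmono : MonotoneOn ω (Set.Ioc (0 : ℝ) 1)) :
    (∃ C : ℝ, 0 < C ∧ ∀ r ∈ Set.Ico (0 : ℝ) 1, Phi ω (1 - r) ≤ C * Phi ω (1 - r ^ 2)) ∧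
    ∀ r : ℝ, 2 / 3 < r → r < 1 → Phi ω (1 - r) ≤ 4 * Phi ω (1 - r ^ 2) := by
  have hω := monotoneOn_sq_of_pos hωpos hωmono
  refine ⟨⟨1 + ω 1 ^ 2, by positivity, ?_⟩, fun r hr23 hr1 => ?_⟩
  · rintro r ⟨hr0, hr1⟩
    have hb : 1 - r ^ 2 ∈ Ioc (0 : ℝ) 1 := ⟨by nlinarith, by nlinarith⟩
    have hωb : ω (1 - r ^ 2) ^ 2 ≤ ω 1 ^ 2 := hω hb ⟨one_pos, le_rfl⟩ hb.2
    have hlog : log (1 + r) ≤ 1 := (log_le_sub_one_of_pos (by linarith)).trans (by linarith)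
    have hlog0 : 0 ≤ log (1 + r) := log_nonneg (by linarith)
    have := one_le_Phi ω hb.1.le
    calc Phi ω (1 - r) ≤ Phi ω (1 - r ^ 2) + ω (1 - r ^ 2) ^ 2 * log (1 + r) :=
          Phi_one_sub_le hω ⟨hr0, hr1⟩
      _ ≤ Phi ω (1 - r ^ 2) + ω 1 ^ 2 * 1 := by gcongr
      _ ≤ (1 + ω 1 ^ 2) * Phi ω (1 - r ^ 2) := by nlinarith
  · have hb : 1 - r ^ 2 ∈ Ioc (0 : ℝ) 1 := ⟨by nlinarith, by nlinarith⟩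
    calc Phi ω (1 - r) ≤ Phi ω (1 - r ^ 2) + ω (1 - r ^ 2) ^ 2 * log (1 + r) :=
          Phi_one_sub_le hω ⟨by linarith, hr1⟩
      _ ≤ Phi ω (1 - r ^ 2) + ω (1 - r ^ 2) ^ 2 * (3 * log (1 / (1 - r ^ 2))) := by
          gcongr
          exact log_one_add_le_three_mul_log_one_div hr23 hr1
      _ ≤ 4 * Phi ω (1 - r ^ 2) := by
          linarith [mul_log_one_div_le_Phi_sub_one hω hb.1 hb.2, one_le_Phi ω hb.1.le]
end

section
/- Let ω : (0,1] → (0,∞) be an increasing function, let J ≥ 1, let δ > 0, and suppose that for each k ≥ 0 and 1 ≤ j ≤ J, P_{k,j} : ℂ^d → ℂ is a holomorphic homogeneous polynomial of degree 2^k − 1 such that max_{1≤j≤J} |P_{k,j}(ξ)| ≥ δ for every ξ ∈ S_d. Then there exists a constant C = C(ω) > 0 such that Σ_{k=0}^∞ Σ_{j=1}^J ω²(2^{-k}) |P_{k,j}(z)|² ≥ δ² C · Φ(1−|z|²) for all z ∈ B_d. -/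
/-!
Put `x = 1 - |z|²` and pick `K` with `2^{-(K+1)} < x ≤ 2^{-K}`. For `k ≤ K`, homogeneity and the
condition on the sphere give some `j` with `|P_{k,j}(z)|² ≥ δ² |z|^{2(2^k - 1)} ≥ δ² (1 - 2^{-k})^{2^k - 1}
≥ δ² e⁻²`, so the series is at least `δ² e⁻² Σ_{k ≤ K} ω²(2^{-k})`. On the other hand, splitting
`(2^{-(K+1)}, 1]` into dyadic blocks and using monotonicity of `ω` on each block,
`Φ(x) ≤ 1 + log 2 · Σ_{k ≤ K} ω²(2^{-k}) ≤ (ω(1)⁻² + log 2) Σ_{k ≤ K} ω²(2^{-k})`.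
-/

open MeasureTheory Metric Set Filter

noncomputable instance (d : ℕ) : MeasurableSpace (EuclideanSpace ℂ (Fin d)) := borel _
instance (d : ℕ) : BorelSpace (EuclideanSpace ℂ (Fin d)) := ⟨rfl⟩

/-- A fixed additive Haar (Lebesgue) measure on `ℂ^d`. -/
noncomputable def haarCd (d : ℕ) : Measure (EuclideanSpace ℂ (Fin d)) :=
  (Module.Basis.ofVectorSpace ℝ (EuclideanSpace ℂ (Fin d))).addHaar

/-- The normalized surface measure `σ_d` on the unit sphere of `ℂ^d`. -/
noncomputable def sigmaD (d : ℕ) : Measure (sphere (0 : EuclideanSpace ℂ (Fin d)) 1) :=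
  ((haarCd d).toSphere Set.univ)⁻¹ • (haarCd d).toSphere

/-- The radial derivative `Rf(z) = Σ z_j ∂f/∂z_j (z)` of a holomorphic function. -/
noncomputable def radDeriv {d : ℕ} (f : EuclideanSpace ℂ (Fin d) → ℂ)
    (z : EuclideanSpace ℂ (Fin d)) : ℂ := fderiv ℂ f z z

open Real Finset

lemma exp_neg_two_mul_le_one_sub {t : ℝ} (h0 : 0 ≤ t) (h1 : t ≤ 1 / 2) :
    exp (-(2 * t)) ≤ 1 - t := by
  have hinv : (1 + 2 * t)⁻¹ ≤ 1 - t := by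
    rw [inv_le_iff_one_le_mul₀ (by positivity)]
    nlinarith
  calc exp (-(2 * t)) = (exp (2 * t))⁻¹ := exp_neg _
    _ ≤ (1 + 2 * t)⁻¹ := by gcongr; linarith [add_one_le_exp (2 * t)]
    _ ≤ 1 - t := hinv

lemma exp_neg_two_le_one_sub_pow {x : ℝ} (k : ℕ) (hx : x ≤ 2⁻¹ ^ k) :
    exp (-2) ≤ (1 - x) ^ (2 ^ k - 1) := by
  rcases Nat.eq_zero_or_pos k with rfl | hk
  · simp [exp_le_one_iff]
  set t : ℝ := 2⁻¹ ^ k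
  have ht : t ≤ 1 / 2 := by
    calc t ≤ 2⁻¹ ^ 1 := pow_le_pow_of_le_one (by norm_num) (by norm_num) hk
      _ = 1 / 2 := by norm_num
  have hexp : exp (-(2 * t)) ≤ 1 - x :=
    (exp_neg_two_mul_le_one_sub (by positivity) ht).trans (by linarith)
  have hcast : ((2 ^ k - 1 : ℕ) : ℝ) * t = 1 - t := by
    rw [Nat.cast_sub Nat.one_le_two_pow]
    simp [t, sub_mul, inv_pow]
  calc exp (-2) ≤ exp (-(2 * t)) ^ (2 ^ k - 1) := by
        rw [← exp_nat_mul, exp_le_exp]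
        nlinarith [show 0 < t by positivity]
    _ ≤ (1 - x) ^ (2 ^ k - 1) := by gcongr

section DyadicIntegral

variable {f : ℝ → ℝ}

lemma intervalIntegrable_div_self_of_monotoneOn {a b : ℝ} (ha : 0 < a) (hab : a ≤ b)
    (hf : MonotoneOn f (Icc a b)) : IntervalIntegrable (fun t => f t / t) volume a b := by
  simp_rw [div_eq_mul_inv]
  refine (MonotoneOn.intervalIntegrable (by rwa [uIcc_of_le hab])).mul_continuousOn ?_
  refine continuousOn_inv₀.mono fun t ht => ?_
  rw [uIcc_of_le hab] at ht
  exact (ha.trans_le ht.1).ne'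

lemma integral_div_self_le_log_two_mul {b : ℝ} (hb : 0 < b) (hf : MonotoneOn f (Icc (b / 2) b)) :
    ∫ t in b / 2..b, f t / t ≤ log 2 * f b := by
  have hb2 : 0 < b / 2 := by positivity
  have hle : b / 2 ≤ b := by linarith
  calc ∫ t in b / 2..b, f t / t ≤ ∫ t in b / 2..b, f b / t := by
        refine intervalIntegral.integral_mono_on hle
          (intervalIntegrable_div_self_of_monotoneOn hb2 hle hf)
          (intervalIntegrable_div_self_of_monotoneOn hb2 hle monotoneOn_const) fun t ht => ?_
        exact div_le_div_of_nonneg_right (hf ht (right_mem_Icc.2 hle) ht.2)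
          (hb2.trans_le ht.1).le
    _ = log 2 * f b := by
        simp_rw [div_eq_mul_inv (f b)]
        rw [intervalIntegral.integral_const_mul, integral_inv_of_pos hb2 hb,
          div_div_cancel₀ hb.ne', mul_comm]

lemma integral_div_self_le_log_two_mul_sum (hf : MonotoneOn f (Ioc 0 1)) (n : ℕ) :
    ∫ t in (2⁻¹ ^ n : ℝ)..1, f t / t ≤ log 2 * ∑ k ∈ range n, f (2⁻¹ ^ k) := by
  have hblock (k : ℕ) : (2⁻¹ : ℝ) ^ (k + 1) = 2⁻¹ ^ k / 2 := by
    rw [pow_succ, div_eq_mul_inv]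
  have hsub (k : ℕ) : Icc ((2⁻¹ : ℝ) ^ (k + 1)) (2⁻¹ ^ k) ⊆ Ioc 0 1 := fun t ht =>
    ⟨(pow_pos (by norm_num) _).trans_le ht.1, ht.2.trans (pow_le_one₀ (by norm_num) (by norm_num))⟩
  have hsplit : ∫ t in (2⁻¹ ^ n : ℝ)..1, f t / t =
      ∑ k ∈ range n, ∫ t in (2⁻¹ ^ (k + 1) : ℝ)..2⁻¹ ^ k, f t / t := by
    rw [intervalIntegral.integral_symm, ← pow_zero (2⁻¹ : ℝ),
      ← intervalIntegral.sum_integral_adjacent_intervals (a := fun k => (2⁻¹ : ℝ) ^ k),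
      ← sum_neg_distrib]
    · simp_rw [← intervalIntegral.integral_symm]
    · intro k _
      refine (intervalIntegrable_div_self_of_monotoneOn (by positivity) ?_ (hf.mono (hsub k))).symm
      rw [hblock]; linarith [pow_pos (by norm_num : (0 : ℝ) < 2⁻¹) k]
  rw [hsplit, mul_sum]
  refine sum_le_sum fun k _ => ?_
  rw [hblock]
  exact integral_div_self_le_log_two_mul (by positivity) (hblock k ▸ hf.mono (hsub k))

end DyadicIntegral

lemma Phi_le_mul_sum {ω : ℝ → ℝ} (hω : MonotoneOn (fun t => ω t ^ 2) (Ioc 0 1)) (hω1 : ω 1 ≠ 0)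
    {x : ℝ} {K : ℕ} (hx : 2⁻¹ ^ (K + 1) ≤ x) :
    Phi ω x ≤ ((ω 1 ^ 2)⁻¹ + log 2) * ∑ k ∈ range (K + 1), ω (2⁻¹ ^ k) ^ 2 := by
  set S := ∑ k ∈ range (K + 1), ω (2⁻¹ ^ k) ^ 2
  have hS : ω 1 ^ 2 ≤ S := by
    have h0 := single_le_sum (f := fun k => ω (2⁻¹ ^ k) ^ 2) (fun k _ => sq_nonneg _)
      (mem_range.2 K.succ_pos)
    rwa [pow_zero] at h0
  have hone : 1 ≤ (ω 1 ^ 2)⁻¹ * S := by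
    rwa [le_inv_mul_iff₀ (by positivity), mul_one]
  have ha : (0 : ℝ) < 2⁻¹ ^ (K + 1) := by positivity
  have ha1 : (2⁻¹ : ℝ) ^ (K + 1) ≤ 1 := pow_le_one₀ (by norm_num) (by norm_num)
  have hint : IntegrableOn (fun t => ω t ^ 2 / t) (Ioc (2⁻¹ ^ (K + 1)) 1) :=
    (intervalIntegrable_iff_integrableOn_Ioc_of_le ha1).1 <|
      intervalIntegrable_div_self_of_monotoneOn ha ha1 <|
        hω.mono fun t ht => ⟨ha.trans_le ht.1, ht.2⟩
  have htail : ∫ t in Ioc x 1, ω t ^ 2 / t ≤ log 2 * S := by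
    refine le_trans ?_ (integral_div_self_le_log_two_mul_sum hω (K + 1))
    rw [intervalIntegral.integral_of_le ha1]
    refine setIntegral_mono_set hint ?_ (Ioc_subset_Ioc_left hx).eventuallyLE
    filter_upwards [self_mem_ae_restrict measurableSet_Ioc] with t ht
    exact div_nonneg (sq_nonneg _) (ha.trans ht.1).le
  calc Phi ω x ≤ (ω 1 ^ 2)⁻¹ * S + log 2 * S := add_le_add hone htail
    _ = ((ω 1 ^ 2)⁻¹ + log 2) * S := by ring

section Homogeneous

variable {E : Type*} [NormedAddCommGroup E] [NormedSpace ℂ E] [Nontrivial E]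

lemma exists_mem_sphere_eq_norm_smul (z : E) : ∃ ξ ∈ sphere (0 : E) 1, z = (‖z‖ : ℂ) • ξ := by
  by_cases hz : z = 0
  · obtain ⟨ξ, hξ⟩ := exists_norm_eq E zero_le_one
    exact ⟨ξ, mem_sphere_zero_iff_norm.2 hξ, by simp [hz]⟩
  · have hz' : (‖z‖ : ℂ) ≠ 0 := by simpa using hz
    refine ⟨(‖z‖ : ℂ)⁻¹ • z, ?_, (smul_inv_smul₀ hz' z).symm⟩
    rw [mem_sphere_zero_iff_norm, norm_smul, norm_inv, Complex.norm_real, norm_norm,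
      inv_mul_cancel₀ (norm_ne_zero_iff.2 hz)]

lemma exists_le_norm_of_homogeneous {ι : Type*} {p : ι → E → ℂ} {n : ℕ} {δ : ℝ}
    (hp : ∀ i (l : ℂ) z, p i (l • z) = l ^ n * p i z)
    (hδ : ∀ ξ ∈ sphere (0 : E) 1, ∃ i, δ ≤ ‖p i ξ‖) (z : E) :
    ∃ i, δ * ‖z‖ ^ n ≤ ‖p i z‖ := by
  obtain ⟨ξ, hξ, hzξ⟩ := exists_mem_sphere_eq_norm_smul z
  obtain ⟨i, hi⟩ := hδ ξ hξ
  refine ⟨i, ?_⟩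
  conv_rhs => rw [hzξ]
  rw [hp, norm_mul, norm_pow, Complex.norm_real, norm_norm, mul_comm δ]
  exact mul_le_mul_of_nonneg_left hi (by positivity)

lemma mul_exp_neg_two_le_sum_norm_sq {ι : Type*} [Fintype ι] {p : ι → E → ℂ} {k : ℕ} {δ : ℝ}
    (hδ : 0 ≤ δ) (hp : ∀ i (l : ℂ) z, p i (l • z) = l ^ (2 ^ k - 1) * p i z)
    (hpδ : ∀ ξ ∈ sphere (0 : E) 1, ∃ i, δ ≤ ‖p i ξ‖) {z : E} (hz : 1 - ‖z‖ ^ 2 ≤ 2⁻¹ ^ k) :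
    δ ^ 2 * exp (-2) ≤ ∑ i, ‖p i z‖ ^ 2 := by
  obtain ⟨i, hi⟩ := exists_le_norm_of_homogeneous hp hpδ z
  have hpow : exp (-2) ≤ (‖z‖ ^ 2) ^ (2 ^ k - 1) := by
    simpa using exp_neg_two_le_one_sub_pow k hz
  calc δ ^ 2 * exp (-2) ≤ (δ * ‖z‖ ^ (2 ^ k - 1)) ^ 2 := by
        rw [mul_pow, ← pow_mul, mul_comm _ 2, pow_mul]; gcongr
    _ ≤ ‖p i z‖ ^ 2 := by gcongr
    _ ≤ ∑ i, ‖p i z‖ ^ 2 := single_le_sum (fun i _ => sq_nonneg ‖p i z‖) (mem_univ i)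

end Homogeneous

theorem stmt18_general (d : ℕ) (hd : 1 ≤ d) (ω : ℝ → ℝ)
    (hωpos : ∀ t ∈ Set.Ioc (0 : ℝ) 1, 0 < ω t)
    (hωmono : MonotoneOn ω (Set.Ioc (0 : ℝ) 1))
    (J : ℕ) (δ : ℝ) (hδ : 0 < δ)
    (P : ℕ → Fin J → EuclideanSpace ℂ (Fin d) → ℂ)
    (hPhom : ∀ (k : ℕ) (j : Fin J) (l : ℂ) (z : EuclideanSpace ℂ (Fin d)),
      P k j (l • z) = l ^ (2 ^ k - 1) * P k j z)
    (hPmax : ∀ k : ℕ, ∀ ξ ∈ sphere (0 : EuclideanSpace ℂ (Fin d)) 1,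
      ∃ j : Fin J, δ ≤ ‖P k j ξ‖) :
    ∃ C : ℝ, 0 < C ∧
      ∀ z ∈ ball (0 : EuclideanSpace ℂ (Fin d)) 1,
        ENNReal.ofReal (δ ^ 2 * C * Phi ω (1 - ‖z‖ ^ 2)) ≤
          ∑' k : ℕ, ∑ j : Fin J, ENNReal.ofReal (ω ((2 : ℝ)⁻¹ ^ k) ^ 2 * ‖P k j z‖ ^ 2) := by
  have : Nonempty (Fin d) := ⟨⟨0, hd⟩⟩
  have hω2 : MonotoneOn (fun t => ω t ^ 2) (Ioc 0 1) := fun s hs t ht hst =>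
    pow_le_pow_left₀ (hωpos s hs).le (hωmono hs ht hst) 2
  have hω1 : 0 < ω 1 := hωpos 1 (right_mem_Ioc.2 one_pos)
  refine ⟨exp (-2) / ((ω 1 ^ 2)⁻¹ + log 2), by positivity, fun z hz => ?_⟩
  have hz1 : ‖z‖ < 1 := mem_ball_zero_iff.1 hz
  obtain ⟨K, hK, hKx⟩ := exists_nat_pow_near_of_lt_one (x := 1 - ‖z‖ ^ 2)
    (by nlinarith [norm_nonneg z]) (by nlinarith) (by norm_num) (by norm_num : (2⁻¹ : ℝ) < 1)
  have hterm : ∀ k ∈ range (K + 1), δ ^ 2 * exp (-2) * ω (2⁻¹ ^ k) ^ 2 ≤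
      ∑ j, ω (2⁻¹ ^ k) ^ 2 * ‖P k j z‖ ^ 2 := fun k hk => by
    rw [← mul_sum, mul_comm]
    gcongr
    exact mul_exp_neg_two_le_sum_norm_sq hδ.le (hPhom k) (hPmax k) <|
      hKx.trans (pow_le_pow_of_le_one (by norm_num) (by norm_num) (mem_range_succ_iff.1 hk))
  calc ENNReal.ofReal (δ ^ 2 * (exp (-2) / ((ω 1 ^ 2)⁻¹ + log 2)) * Phi ω (1 - ‖z‖ ^ 2))
      ≤ ENNReal.ofReal (∑ k ∈ range (K + 1), δ ^ 2 * exp (-2) * ω (2⁻¹ ^ k) ^ 2) := by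
        refine ENNReal.ofReal_le_ofReal ?_
        rw [← mul_sum, mul_div_assoc', div_mul_eq_mul_div, div_le_iff₀ (by positivity),
          mul_assoc _ (∑ k ∈ range (K + 1), _)]
        gcongr
        exact (Phi_le_mul_sum hω2 hω1.ne' hK.le).trans_eq (mul_comm _ _)
    _ ≤ ENNReal.ofReal (∑ k ∈ range (K + 1), ∑ j, ω (2⁻¹ ^ k) ^ 2 * ‖P k j z‖ ^ 2) :=
        ENNReal.ofReal_le_ofReal (sum_le_sum hterm)
    _ = ∑ k ∈ range (K + 1), ∑ j, ENNReal.ofReal (ω (2⁻¹ ^ k) ^ 2 * ‖P k j z‖ ^ 2) := by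
        rw [ENNReal.ofReal_sum_of_nonneg fun k _ => by positivity]
        exact sum_congr rfl fun k _ => ENNReal.ofReal_sum_of_nonneg fun j _ => by positivity
    _ ≤ _ := ENNReal.sum_le_tsum _

/-- lower estimate `Σ_k Σ_j ω²(2^{-k}) |P_{k,j}(z)|² ≥ δ² C Φ(1-|z|²)` for
families of homogeneous polynomials of degree `2^k - 1` with `max_j |P_{k,j}| ≥ δ` on the
sphere. -/
theorem stmt18 (d : ℕ) (hd : 1 ≤ d) (ω : ℝ → ℝ)
    (hωpos : ∀ t ∈ Set.Ioc (0 : ℝ) 1, 0 < ω t)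
    (hωmono : MonotoneOn ω (Set.Ioc (0 : ℝ) 1))
    (J : ℕ) (hJ : 1 ≤ J) (δ : ℝ) (hδ : 0 < δ)
    (P : ℕ → Fin J → EuclideanSpace ℂ (Fin d) → ℂ)
    (hPhol : ∀ (k : ℕ) (j : Fin J), Differentiable ℂ (P k j))
    (hPhom : ∀ (k : ℕ) (j : Fin J) (l : ℂ) (z : EuclideanSpace ℂ (Fin d)),
      P k j (l • z) = l ^ (2 ^ k - 1) * P k j z)
    (hPmax : ∀ k : ℕ, ∀ ξ ∈ sphere (0 : EuclideanSpace ℂ (Fin d)) 1,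
      ∃ j : Fin J, δ ≤ ‖P k j ξ‖) :
    ∃ C : ℝ, 0 < C ∧
      ∀ z ∈ ball (0 : EuclideanSpace ℂ (Fin d)) 1,
        ENNReal.ofReal (δ ^ 2 * C * Phi ω (1 - ‖z‖ ^ 2)) ≤
          ∑' k : ℕ, ∑ j : Fin J, ENNReal.ofReal (ω ((2 : ℝ)⁻¹ ^ k) ^ 2 * ‖P k j z‖ ^ 2) :=
  stmt18_general d hd ω hωpos hωmono J δ hδ P hPhom hPmax
end
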